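/- arXiv:1710.04722 — 9 statements merged into one kernel-verified Lean document; each statement's English description precedes it below -/
import Mathlib

section
/- Let S be a 0-left-cancellative semigroup with zero admitting least common multiples. For a finite subset Λ ⊆ t̃S with Λ ∩ S ≠ ∅ and elements u, v ∈ Λ, let θ_u f_Λ θ_v⁻¹ denote the partial bijection of S' with domain θ_v(F_Λ) and range θ_u(F_Λ) sending v·x ↦ u·x for x ∈ F_Λ (with the convention 1·x = x). Then the collection H = {θ_u f_Λ θ_v⁻¹ : Λ ⊆ t̃S finite, Λ ∩ S ≠ ∅, u, v ∈ Λ} is exactly the inverse hull of S, i.e. the smallest collection of partial bijections of S' that contains θ_s for every s ∈ S and is closed under composition (of partial maps) and under taking inverses. -/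
/-!
The identity on `F_Λ` is a composite of the idempotents `θ_s⁻¹ θ_s = id_{F_s}`, `s ∈ Λ ∩ S`
(the factor `F_1 = S'` is redundant once there is such an `s`), and `θ_u f_Λ θ_v⁻¹` is
`(θ_v ∘ id_{F_Λ})⁻¹` followed by `θ_u ∘ id_{F_Λ}`; so every closed family containing the `θ_s`
contains `H`. Conversely `H` consists of partial bijections by 0-left-cancellativity, contains
`θ_s = θ_s f_Λ θ_1⁻¹` for `Λ = {s, 1}`, and is closed under inverses (swap `u` and `v`) and
under composition: if `u₁ e₁ = v₂ e₂` is a least common multiple of `u₁` and `v₂`, the pairs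
`(x, y)` with `u₁ x = v₂ y ≠ 0` are exactly the pairs `(e₁ z, e₂ z)`, whence
`θ_{u₂} f_{Λ₂} θ_{v₂}⁻¹ ∘ θ_{u₁} f_{Λ₁} θ_{v₁}⁻¹ = θ_{u₂ e₂} f_{Λ₁ e₁ ∪ Λ₂ e₂} θ_{v₁ e₁}⁻¹`.
-/

namespace ExSt

variable {S : Type*} [SemigroupWithZero S]

/-- `s` divides `t`: `t = s` or `t = s * u` for some `u`. -/
def Divides (s t : S) : Prop := t = s ∨ ∃ u : S, t = s * u

/-- `r` is a least common multiple of `s` and `t`. -/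
def IsLCM (s t r : S) : Prop :=
  (Set.range (s * ·) ∩ Set.range (t * ·) = Set.range (r * ·)) ∧ Divides s r ∧ Divides t r

/-- `S` is 0-left-cancellative. -/
def LeftCancel0 (S : Type*) [SemigroupWithZero S] : Prop :=
  ∀ s t r : S, s * t = s * r → s * t ≠ 0 → t = r

/-- `S` admits least common multiples. -/
def AdmitsLCM (S : Type*) [SemigroupWithZero S] : Prop :=
  ∀ s t : S, ∃ r : S, IsLCM s t r

/-- A string in `S`. -/
def IsString (σ : Set S) : Prop :=
  σ.Nonempty ∧ (0 : S) ∉ σ ∧ (∀ s t : S, Divides s t → t ∈ σ → s ∈ σ) ∧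
    ∀ s₁ ∈ σ, ∀ s₂ ∈ σ, ∃ s ∈ σ, Divides s₁ s ∧ Divides s₂ s

/-- `F_s = {x | s * x ≠ 0}`. -/
def Fset (s : S) : Set S := {x | s * x ≠ 0}

/-- `E_s = sS \ {0}`. -/
def Eset (s : S) : Set S := {y | ∃ x : S, y = s * x ∧ s * x ≠ 0}

/-- `F_w` for `w` in the unitization `t̃S = S ∪ {1}` (modelled as `Option S`, `none = 1`). -/
def FsetW : Option S → Set S
  | none => {x | x ≠ 0}
  | some s => Fset s

/-- `E_w` for `w` in the unitization, with `E_1 = S'`. -/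
def EsetW : Option S → Set S
  | none => {x | x ≠ 0}
  | some s => Eset s

/-- `F_Λ = ⋂_{w ∈ Λ} F_w`. -/
def FsetLam (Λ : Finset (Option S)) : Set S := ⋂ w ∈ Λ, FsetW w

/-- Left multiplication by `u ∈ t̃S` (with `1 · x = x`). -/
def thetaApp : Option S → S → S
  | none, x => x
  | some u, x => u * x

/-- `θ_u(X)` for `u ∈ t̃S`. -/
def thetaImg (u : Option S) (X : Set S) : Set S := thetaApp u '' X

/-- The family `𝔈(S)` of constructible sets. -/
def Econs (S : Type*) [SemigroupWithZero S] : Set (Set S) :=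
  {X | ∃ Λ : Finset (Option S), (∃ s : S, some s ∈ Λ) ∧ ∃ u ∈ Λ, X = thetaImg u (FsetLam Λ)}

/-- `r*σ = {t | t ∥ r·s for some s ∈ σ}`. -/
def rstar (r : S) (σ : Set S) : Set S := {t | ∃ s ∈ σ, Divides t (r * s)}

/-- `r⁻¹*σ = {t | r·t ∈ σ}`. -/
def rinvstar (r : S) (σ : Set S) : Set S := {t | r * t ∈ σ}

/-- `F*_r`: strings `σ` with `r·s ≠ 0` for all `s ∈ σ`. -/
def Fstar (r : S) : Set (Set S) := {σ | IsString σ ∧ ∀ s ∈ σ, r * s ≠ 0}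

/-- `E*_r`: strings `σ` with `σ ∩ rS ≠ ∅`. -/
def Estar (r : S) : Set (Set S) := {σ | IsString σ ∧ (σ ∩ Set.range (r * ·)).Nonempty}

/-- `F*_w` for `w` in the unitization, with `F*_1` the set of all strings. -/
def FstarW : Option S → Set (Set S)
  | none => {σ | IsString σ}
  | some r => Fstar r

/-- `F*_Λ = ⋂_{w ∈ Λ} F*_w`. -/
def FstarLam (Λ : Finset (Option S)) : Set (Set S) := ⋂ w ∈ Λ, FstarW w

/-- The action of `u ∈ t̃S` on strings (with `1*σ = σ`). -/
def thetaStarApp : Option S → Set S → Set S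
  | none => id
  | some u => rstar u

/-- `θ*_u(Y)` for `u ∈ t̃S`. -/
def thetaStarImg (u : Option S) (Y : Set (Set S)) : Set (Set S) := thetaStarApp u '' Y

/-- A character of the semilattice `E` (values `False`/`True` playing the role of `0`/`1`). -/
def IsCharacter (E : Set (Set S)) (φ : Set S → Prop) : Prop :=
  ¬ φ ∅ ∧ (∃ X ∈ E, φ X) ∧ ∀ X ∈ E, ∀ Y ∈ E, (φ (X ∩ Y) ↔ φ X ∧ φ Y)

/-- An ultra-character: a character maximal for the pointwise order on `E`. -/
def IsUltraCharacter (E : Set (Set S)) (φ : Set S → Prop) : Prop :=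
  IsCharacter E φ ∧
    ∀ ψ : Set S → Prop, IsCharacter E ψ → (∀ X ∈ E, φ X → ψ X) → ∀ X ∈ E, ψ X → φ X

/-- The character `φ_σ` associated with a string `σ`. -/
def phiStr (σ : Set S) (X : Set S) : Prop :=
  ∃ Λ : Finset (Option S), (∃ s : S, some s ∈ Λ) ∧ ∃ u ∈ Λ,
    X = thetaImg u (FsetLam Λ) ∧ σ ∈ thetaStarImg u (FstarLam Λ)

/-- The set `σ_φ = {s | φ(E_s) = 1}` associated with a character `φ`. -/
def sigmaOf (φ : Set S → Prop) : Set S := {s | φ (Eset s)}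

/-- The interior of a string. -/
def strInterior (σ : Set S) : Set S := {s | ∃ x : S, s * x ∈ σ}

/-- The graph of the regular representation map `θ_s : F_s → E_s`, `x ↦ s·x`. -/
def graphTheta (s : S) : Set (S × S) := {p | p.2 = s * p.1 ∧ s * p.1 ≠ 0}

/-- Composition of partial maps, represented by their graphs: first `R₁`, then `R₂`. -/
def compGraph (R₁ R₂ : Set (S × S)) : Set (S × S) := {p | ∃ y : S, (p.1, y) ∈ R₁ ∧ (y, p.2) ∈ R₂}

/-- Inverse of a partial map, represented by its graph. -/
def invGraph (R : Set (S × S)) : Set (S × S) := {p | (p.2, p.1) ∈ R}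

/-- `R` is (the graph of) a partial bijection of `S' = S \ {0}`. -/
def IsPartialBij (R : Set (S × S)) : Prop :=
  (∀ p ∈ R, p.1 ≠ (0 : S) ∧ p.2 ≠ (0 : S)) ∧
    (∀ x y y' : S, (x, y) ∈ R → (x, y') ∈ R → y = y') ∧
    ∀ x x' y : S, (x, y) ∈ R → (x', y) ∈ R → x = x'

def mulW : Option S → Option S → Option S
  | none, e => e
  | some t, none => some t
  | some t, some e => some (t * e)

lemma thetaApp_mulW (w e : Option S) (z : S) :
    thetaApp (mulW w e) z = thetaApp w (thetaApp e z) := by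
  cases w <;> cases e <;> simp [mulW, thetaApp, mul_assoc]

lemma exists_mulW_some_eq (t : S) (e : Option S) : ∃ s, mulW (some t) e = some s := by
  cases e <;> exact ⟨_, rfl⟩

lemma Divides.exists_mulW_eq {r c : S} (h : Divides r c) : ∃ e, mulW (some r) e = some c := by
  rcases h with rfl | ⟨e, rfl⟩
  exacts [⟨none, rfl⟩, ⟨some e, rfl⟩]

lemma thetaApp_cancel (hlc : LeftCancel0 S) (w : Option S) {x x' : S}
    (h : thetaApp w x = thetaApp w x') (hne : thetaApp w x ≠ 0) : x = x' := by
  cases w with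
  | none => exact h
  | some r => exact hlc r x x' h hne

lemma mem_fsetW {w : Option S} {x : S} : x ∈ FsetW w ↔ thetaApp w x ≠ 0 := by
  cases w <;> rfl

lemma mem_fsetLam {Λ : Finset (Option S)} {x : S} :
    x ∈ FsetLam Λ ↔ ∀ w ∈ Λ, thetaApp w x ≠ 0 := by
  simp only [FsetLam, Set.mem_iInter, mem_fsetW]

lemma fsetLam_empty : FsetLam (∅ : Finset (Option S)) = Set.univ := by
  simp [FsetLam]

lemma fsetLam_insert [DecidableEq S] (w : Option S) (Λ : Finset (Option S)) :
    FsetLam (insert w Λ) = FsetW w ∩ FsetLam Λ :=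
  Finset.set_biInter_insert w Λ FsetW

lemma fsetLam_union [DecidableEq S] (Λ₁ Λ₂ : Finset (Option S)) :
    FsetLam (Λ₁ ∪ Λ₂) = FsetLam Λ₁ ∩ FsetLam Λ₂ := by
  ext x
  simp only [Set.mem_inter_iff, mem_fsetLam, Finset.mem_union, or_imp, forall_and]

lemma mem_fsetLam_image_mulW [DecidableEq S] {Λ : Finset (Option S)} {e : Option S} {z : S} :
    z ∈ FsetLam (Λ.image (mulW · e)) ↔ thetaApp e z ∈ FsetLam Λ := by
  simp only [mem_fsetLam, Finset.forall_mem_image, thetaApp_mulW]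

lemma fsetLam_subset_fset {Λ : Finset (Option S)} {s : S} (hs : some s ∈ Λ) :
    FsetLam Λ ⊆ Fset s :=
  fun _ hx => mem_fsetLam.mp hx _ hs

def diagOn {α : Type*} (A : Set α) : Set (α × α) := {p | ∃ x ∈ A, p = (x, x)}

lemma mem_diagOn {α : Type*} {A : Set α} {a b : α} : (a, b) ∈ diagOn A ↔ a ∈ A ∧ a = b := by
  simp only [diagOn, Set.mem_ofPred_eq, Prod.mk.injEq]
  constructor
  · rintro ⟨x, hx, rfl, rfl⟩
    exact ⟨hx, rfl⟩
  · rintro ⟨ha, rfl⟩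
    exact ⟨a, ha, rfl, rfl⟩

lemma compGraph_diagOn {α : Type*} (A B : Set α) :
    compGraph (diagOn A) (diagOn B) = diagOn (A ∩ B) := by
  ext ⟨a, b⟩
  simp only [compGraph, Set.mem_ofPred_eq, mem_diagOn, Set.mem_inter_iff]
  constructor
  · rintro ⟨_, ⟨ha, rfl⟩, hb, rfl⟩
    exact ⟨⟨ha, hb⟩, rfl⟩
  · rintro ⟨⟨ha, hb⟩, rfl⟩
    exact ⟨a, ⟨ha, rfl⟩, hb, rfl⟩

lemma compGraph_graphTheta_invGraph (hlc : LeftCancel0 S) (s : S) :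
    compGraph (graphTheta s) (invGraph (graphTheta s)) = diagOn (Fset s) := by
  ext ⟨a, b⟩
  simp only [compGraph, invGraph, graphTheta, Set.mem_ofPred_eq, mem_diagOn]
  constructor
  · rintro ⟨_, ⟨rfl, hne⟩, h, -⟩
    exact ⟨hne, hlc s a b h hne⟩
  · rintro ⟨hne, rfl⟩
    exact ⟨s * a, ⟨rfl, hne⟩, rfl, hne⟩

/-- The graph of `θ_u f_Λ θ_v⁻¹`. -/
def conjGraph (Λ : Finset (Option S)) (u v : Option S) : Set (S × S) :=
  {p | ∃ x ∈ FsetLam Λ, p = (thetaApp v x, thetaApp u x)}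

lemma mem_conjGraph {Λ : Finset (Option S)} {u v : Option S} {a b : S} :
    (a, b) ∈ conjGraph Λ u v ↔ ∃ x ∈ FsetLam Λ, thetaApp v x = a ∧ thetaApp u x = b := by
  simp only [conjGraph, Set.mem_ofPred_eq, Prod.mk.injEq, eq_comm]

lemma conjGraph_none_none (Λ : Finset (Option S)) :
    conjGraph Λ none none = diagOn (FsetLam Λ) :=
  rfl

lemma invGraph_conjGraph (Λ : Finset (Option S)) (u v : Option S) :
    invGraph (conjGraph Λ u v) = conjGraph Λ v u := by
  ext ⟨a, b⟩
  change (b, a) ∈ conjGraph Λ u v ↔ (a, b) ∈ conjGraph Λ v u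
  simp only [mem_conjGraph, and_comm]

lemma conjGraph_eq_compGraph (Λ : Finset (Option S)) (u v : Option S) :
    conjGraph Λ u v = compGraph (invGraph (conjGraph Λ v none)) (conjGraph Λ u none) := by
  rw [invGraph_conjGraph]
  ext ⟨a, b⟩
  simp only [compGraph, Set.mem_ofPred_eq, mem_conjGraph]
  constructor
  · rintro ⟨x, hx, rfl, rfl⟩
    exact ⟨x, ⟨x, hx, rfl, rfl⟩, x, hx, rfl, rfl⟩
  · rintro ⟨_, ⟨x, hx, rfl, rfl⟩, _, -, rfl, rfl⟩
    exact ⟨_, hx, rfl, rfl⟩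

lemma conjGraph_some_none {Λ : Finset (Option S)} {t : S} (ht : some t ∈ Λ) :
    conjGraph Λ (some t) none = compGraph (diagOn (FsetLam Λ)) (graphTheta t) := by
  ext ⟨a, b⟩
  simp only [compGraph, graphTheta, Set.mem_ofPred_eq, mem_conjGraph, mem_diagOn, thetaApp]
  constructor
  · rintro ⟨x, hx, rfl, rfl⟩
    exact ⟨x, ⟨hx, rfl⟩, rfl, fsetLam_subset_fset ht hx⟩
  · rintro ⟨_, ⟨hx, rfl⟩, rfl, -⟩
    exact ⟨a, hx, rfl, rfl⟩

lemma graphTheta_eq_conjGraph [DecidableEq S] (s : S) :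
    graphTheta s = conjGraph {some s, none} (some s) none := by
  ext ⟨a, b⟩
  simp only [graphTheta, Set.mem_ofPred_eq, mem_conjGraph, mem_fsetLam, Finset.mem_insert,
    Finset.mem_singleton, forall_eq_or_imp, forall_eq, thetaApp]
  constructor
  · rintro ⟨rfl, hne⟩
    exact ⟨a, ⟨hne, right_ne_zero_of_mul hne⟩, rfl, rfl⟩
  · rintro ⟨_, ⟨hne, -⟩, rfl, rfl⟩
    exact ⟨rfl, hne⟩

lemma isPartialBij_conjGraph (hlc : LeftCancel0 S) {Λ : Finset (Option S)} {u v : Option S}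
    (hu : u ∈ Λ) (hv : v ∈ Λ) : IsPartialBij (conjGraph Λ u v) := by
  have hne {w} (hw : w ∈ Λ) {x} (hx : x ∈ FsetLam Λ) : thetaApp w x ≠ 0 := mem_fsetLam.mp hx w hw
  refine ⟨?_, fun a b b' hb hb' => ?_, fun a a' b ha ha' => ?_⟩
  · rintro _ ⟨x, hx, rfl⟩
    exact ⟨hne hv hx, hne hu hx⟩
  · obtain ⟨x, hx, rfl, rfl⟩ := mem_conjGraph.mp hb
    obtain ⟨x', -, hvx', rfl⟩ := mem_conjGraph.mp hb'
    rw [thetaApp_cancel hlc v hvx'.symm (hne hv hx)]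
  · obtain ⟨x, hx, rfl, rfl⟩ := mem_conjGraph.mp ha
    obtain ⟨x', -, rfl, hux'⟩ := mem_conjGraph.mp ha'
    rw [thetaApp_cancel hlc u hux'.symm (hne hu hx)]

lemma compGraph_conjGraph [DecidableEq S] {Λ₁ Λ₂ : Finset (Option S)} {u₁ v₁ u₂ v₂ e₁ e₂ : Option S}
    (hu₁ : u₁ ∈ Λ₁) (he : mulW u₁ e₁ = mulW v₂ e₂)
    (hsplit : ∀ x y, thetaApp u₁ x ≠ 0 → thetaApp u₁ x = thetaApp v₂ y →
      ∃ z, x = thetaApp e₁ z ∧ y = thetaApp e₂ z) :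
    compGraph (conjGraph Λ₁ u₁ v₁) (conjGraph Λ₂ u₂ v₂) =
      conjGraph (Λ₁.image (mulW · e₁) ∪ Λ₂.image (mulW · e₂)) (mulW u₂ e₂) (mulW v₁ e₁) := by
  ext ⟨a, b⟩
  simp only [compGraph, Set.mem_ofPred_eq, mem_conjGraph, fsetLam_union, Set.mem_inter_iff,
    mem_fsetLam_image_mulW, thetaApp_mulW]
  constructor
  · rintro ⟨_, ⟨x, hx, rfl, rfl⟩, y, hy, hxy, rfl⟩
    obtain ⟨z, rfl, rfl⟩ := hsplit x y (mem_fsetLam.mp hx u₁ hu₁) hxy.symm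
    exact ⟨z, ⟨hx, hy⟩, rfl, rfl⟩
  · rintro ⟨z, ⟨hx, hy⟩, rfl, rfl⟩
    refine ⟨_, ⟨_, hx, rfl, rfl⟩, _, hy, ?_, rfl⟩
    rw [← thetaApp_mulW, ← thetaApp_mulW, he]

lemma exists_lcm_factor (hlc : LeftCancel0 S) (hlcm : AdmitsLCM S) (a b : Option S) :
    ∃ e₁ e₂, mulW a e₁ = mulW b e₂ ∧ ∀ x y, thetaApp a x ≠ 0 → thetaApp a x = thetaApp b y →
      ∃ z, x = thetaApp e₁ z ∧ y = thetaApp e₂ z := by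
  match a, b with
  | none, none => exact ⟨none, none, rfl, fun x y _ h => ⟨x, rfl, h.symm⟩⟩
  | none, some r => exact ⟨some r, none, rfl, fun x y _ h => ⟨y, h, rfl⟩⟩
  | some r, none => exact ⟨none, some r, rfl, fun x y _ h => ⟨x, rfl, h.symm⟩⟩
  | some r₁, some r₂ =>
    obtain ⟨c, hrange, hd₁, hd₂⟩ := hlcm r₁ r₂
    obtain ⟨e₁, he₁⟩ := hd₁.exists_mulW_eq
    obtain ⟨e₂, he₂⟩ := hd₂.exists_mulW_eq
    refine ⟨e₁, e₂, he₁.trans he₂.symm, fun x y hne h => ?_⟩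
    obtain ⟨z, hz⟩ : r₁ * x ∈ Set.range (c * ·) := hrange ▸ ⟨⟨x, rfl⟩, ⟨y, h.symm⟩⟩
    have hc {r e} (he : mulW (some r) e = some c) : c * z = r * thetaApp e z :=
      (congrArg (thetaApp · z) he).symm.trans (thetaApp_mulW _ _ _)
    exact ⟨z, hlc r₁ x _ (hz.symm.trans (hc he₁)) hne,
      hlc r₂ y _ (h.symm.trans (hz.symm.trans (hc he₂))) fun h0 => hne (h.trans h0)⟩

structure ThetaClosed (C : Set (Set (S × S))) : Prop where
  graphTheta_mem : ∀ s, graphTheta s ∈ C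
  compGraph_mem : ∀ R₁ ∈ C, ∀ R₂ ∈ C, compGraph R₁ R₂ ∈ C
  invGraph_mem : ∀ R ∈ C, invGraph R ∈ C

namespace ThetaClosed

variable {C : Set (Set (S × S))}

lemma diagOn_fset_inter_mem [DecidableEq S] (hC : ThetaClosed C) (hlc : LeftCancel0 S)
    (Λ : Finset (Option S)) (s : S) : diagOn (Fset s ∩ FsetLam Λ) ∈ C := by
  induction Λ using Finset.induction_on generalizing s with
  | empty =>
    rw [fsetLam_empty, Set.inter_univ, ← compGraph_graphTheta_invGraph hlc]
    exact hC.compGraph_mem _ (hC.graphTheta_mem s) _ (hC.invGraph_mem _ (hC.graphTheta_mem s))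
  | insert w Λ _ ih =>
    rw [fsetLam_insert]
    cases w with
    | none =>
      have hFs : Fset s ⊆ FsetW none := fun _ => right_ne_zero_of_mul
      rw [← Set.inter_assoc, Set.inter_eq_left.mpr hFs]
      exact ih s
    | some t =>
      rw [← Set.inter_assoc, Set.inter_comm (Fset s), Set.inter_inter_distrib_right,
        ← compGraph_diagOn]
      exact hC.compGraph_mem _ (ih t) _ (ih s)

lemma conjGraph_none_none_mem [DecidableEq S] (hC : ThetaClosed C) (hlc : LeftCancel0 S)
    {Λ : Finset (Option S)} {s : S} (hs : some s ∈ Λ) : conjGraph Λ none none ∈ C := by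
  rw [conjGraph_none_none, ← Set.inter_eq_right.mpr (fsetLam_subset_fset hs)]
  exact hC.diagOn_fset_inter_mem hlc Λ s

lemma conjGraph_none_mem [DecidableEq S] (hC : ThetaClosed C) (hlc : LeftCancel0 S)
    {Λ : Finset (Option S)} {s : S} (hs : some s ∈ Λ) {w : Option S} (hw : w ∈ Λ) :
    conjGraph Λ w none ∈ C := by
  cases w with
  | none => exact hC.conjGraph_none_none_mem hlc hs
  | some t =>
    rw [conjGraph_some_none hw]
    exact hC.compGraph_mem _ (hC.conjGraph_none_none_mem hlc hs) _ (hC.graphTheta_mem t)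

lemma conjGraph_mem [DecidableEq S] (hC : ThetaClosed C) (hlc : LeftCancel0 S)
    {Λ : Finset (Option S)} {s : S} (hs : some s ∈ Λ) {u v : Option S} (hu : u ∈ Λ) (hv : v ∈ Λ) :
    conjGraph Λ u v ∈ C := by
  rw [conjGraph_eq_compGraph]
  exact hC.compGraph_mem _ (hC.invGraph_mem _ (hC.conjGraph_none_mem hlc hs hv)) _
    (hC.conjGraph_none_mem hlc hs hu)

end ThetaClosed

lemma exists_conjGraph_eq_compGraph [DecidableEq S] (hlc : LeftCancel0 S) (hlcm : AdmitsLCM S)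
    {Λ₁ Λ₂ : Finset (Option S)} {s₁ : S} (hs₁ : some s₁ ∈ Λ₁) {u₁ v₁ u₂ v₂ : Option S}
    (hu₁ : u₁ ∈ Λ₁) (hv₁ : v₁ ∈ Λ₁) (hu₂ : u₂ ∈ Λ₂) :
    ∃ Λ : Finset (Option S), (∃ s : S, some s ∈ Λ) ∧ ∃ u ∈ Λ, ∃ v ∈ Λ,
      compGraph (conjGraph Λ₁ u₁ v₁) (conjGraph Λ₂ u₂ v₂) = conjGraph Λ u v := by
  obtain ⟨e₁, e₂, he, hsplit⟩ := exists_lcm_factor hlc hlcm u₁ v₂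
  obtain ⟨s, hs⟩ := exists_mulW_some_eq s₁ e₁
  have mem₁ {w} (hw : w ∈ Λ₁) :=
    Finset.mem_union_left (Λ₂.image (mulW · e₂)) (Finset.mem_image_of_mem (mulW · e₁) hw)
  exact ⟨_, ⟨s, hs ▸ mem₁ hs₁⟩, _, Finset.mem_union_right _ (Finset.mem_image_of_mem _ hu₂),
    _, mem₁ hv₁, compGraph_conjGraph hu₁ he hsplit⟩

/-- The collection `H = {θ_u f_Λ θ_v⁻¹}` equals the inverse hull of `S`, i.e. the smallest
collection of partial bijections of `S'` containing every `θ_s` and closed under composition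
and inverses. -/
theorem inverse_hull_description (hlc : LeftCancel0 S) (hlcm : AdmitsLCM S) :
    {R : Set (S × S) | ∃ Λ : Finset (Option S), (∃ s : S, some s ∈ Λ) ∧ ∃ u ∈ Λ, ∃ v ∈ Λ,
        R = {p : S × S | ∃ x ∈ FsetLam Λ, p = (thetaApp v x, thetaApp u x)}} =
    ⋂₀ {C : Set (Set (S × S)) |
        (∀ R ∈ C, IsPartialBij R) ∧ (∀ s : S, graphTheta s ∈ C) ∧
        (∀ R₁ ∈ C, ∀ R₂ ∈ C, compGraph R₁ R₂ ∈ C) ∧ ∀ R ∈ C, invGraph R ∈ C} := by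
  classical
  refine Set.Subset.antisymm ?_ (Set.sInter_subset_of_mem ⟨?_, fun s => ?_, ?_, ?_⟩)
  · rintro R ⟨Λ, ⟨s, hs⟩, u, hu, v, hv, rfl⟩ C ⟨-, hgen, hcomp, hinv⟩
    exact ThetaClosed.conjGraph_mem ⟨hgen, hcomp, hinv⟩ hlc hs hu hv
  · rintro R ⟨Λ, -, u, hu, v, hv, rfl⟩
    exact isPartialBij_conjGraph hlc hu hv
  · exact ⟨{some s, none}, ⟨s, by simp⟩, some s, by simp, none, by simp,
      graphTheta_eq_conjGraph s⟩
  · rintro _ ⟨Λ₁, ⟨s₁, hs₁⟩, u₁, hu₁, v₁, hv₁, rfl⟩ _ ⟨Λ₂, -, u₂, hu₂, -, -, rfl⟩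
    exact exists_conjGraph_eq_compGraph hlc hlcm hs₁ hu₁ hv₁ hu₂
  · rintro R ⟨Λ, hs, u, hu, v, hv, rfl⟩
    exact ⟨Λ, hs, v, hv, u, hu, invGraph_conjGraph Λ u v⟩

end ExSt
end

section
/- Let S be a 0-left-cancellative semigroup with zero admitting least common multiples. If σ is an open, maximal string in S, then φ_σ is an ultra-character of 𝔈(S). -/
namespace ExSt

variable {S : Type*} [SemigroupWithZero S]

/-! ### Auxiliary lemmas -/

open scoped Classical

theorem divides_rfl (s : S) : Divides s s := Or.inl rfl

theorem Divides.trans' {s t v : S} (h1 : Divides s t) (h2 : Divides t v) : Divides s v := by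
  rcases h1 with rfl | ⟨u, rfl⟩
  · exact h2
  · rcases h2 with rfl | ⟨w, rfl⟩
    · exact Or.inr ⟨u, rfl⟩
    · exact Or.inr ⟨u * w, mul_assoc s u w⟩

theorem Divides.mul_left {s t : S} (r : S) (h : Divides s t) : Divides (r * s) (r * t) := by
  rcases h with rfl | ⟨u, rfl⟩
  · exact Or.inl rfl
  · exact Or.inr ⟨u, (mul_assoc r s u).symm⟩

theorem divides_cancel (hlc : LeftCancel0 S) {r x y : S} (h : Divides (r * x) (r * y))
    (hy : r * y ≠ 0) : Divides x y := by
  rcases h with h | ⟨u, h⟩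
  · exact Or.inl (hlc r y x h hy)
  · rw [mul_assoc] at h
    exact Or.inr ⟨u, hlc r y (x * u) h hy⟩

theorem mul_ne_zero_left {w x y : S} (h : Divides x y) (hwy : w * y ≠ 0) : w * x ≠ 0 := by
  rcases h with rfl | ⟨u, rfl⟩
  · exact hwy
  · intro h0
    exact hwy (by rw [← mul_assoc, h0, zero_mul])

theorem IsString.zero_not_mem {σ : Set S} (hσ : IsString σ) : (0 : S) ∉ σ := hσ.2.1

theorem IsString.ne_zero {σ : Set S} (hσ : IsString σ) {t : S} (ht : t ∈ σ) : t ≠ 0 :=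
  fun h => hσ.2.1 (h ▸ ht)

theorem IsString.divides_mem {σ : Set S} (hσ : IsString σ) {s t : S}
    (h : Divides s t) (ht : t ∈ σ) : s ∈ σ := hσ.2.2.1 s t h ht

theorem IsString.directed {σ : Set S} (hσ : IsString σ) {s₁ s₂ : S}
    (h1 : s₁ ∈ σ) (h2 : s₂ ∈ σ) : ∃ s ∈ σ, Divides s₁ s ∧ Divides s₂ s :=
  hσ.2.2.2 s₁ h1 s₂ h2

/-- Eventual membership of a string in a set. -/
def Ev (σ X : Set S) : Prop := ∃ t₀ ∈ σ, ∀ t ∈ σ, Divides t₀ t → t ∈ X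

theorem Ev.mono {σ X Y : Set S} (h : Ev σ X) (hXY : X ⊆ Y) : Ev σ Y := by
  obtain ⟨t₀, ht₀, h⟩ := h
  exact ⟨t₀, ht₀, fun t ht hd => hXY (h t ht hd)⟩

theorem Ev.not_empty {σ : Set S} (h : Ev σ (∅ : Set S)) : False := by
  obtain ⟨t₀, ht₀, h⟩ := h
  exact h t₀ ht₀ (divides_rfl t₀)

theorem Ev.inter {σ X Y : Set S} (hσ : IsString σ) (hX : Ev σ X) (hY : Ev σ Y) :
    Ev σ (X ∩ Y) := by
  obtain ⟨a, ha, hA⟩ := hX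
  obtain ⟨b, hb, hB⟩ := hY
  obtain ⟨c, hc, hac, hbc⟩ := hσ.directed ha hb
  exact ⟨c, hc, fun t ht hct => ⟨hA t ht (hac.trans' hct), hB t ht (hbc.trans' hct)⟩⟩

theorem mem_FsetLam {Λ : Finset (Option S)} {x : S} :
    x ∈ FsetLam Λ ↔ ∀ w ∈ Λ, x ∈ FsetW w := by simp [FsetLam]

theorem mem_FstarLam {Λ : Finset (Option S)} {σ : Set S} :
    σ ∈ FstarLam Λ ↔ ∀ w ∈ Λ, σ ∈ FstarW w := by simp [FstarLam]

theorem mem_FsetLam_union {A B : Finset (Option S)} {x : S} :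
    x ∈ FsetLam (A ∪ B) ↔ x ∈ FsetLam A ∧ x ∈ FsetLam B := by
  simp only [mem_FsetLam, Finset.mem_union]
  constructor
  · intro h
    exact ⟨fun w hw => h w (Or.inl hw), fun w hw => h w (Or.inr hw)⟩
  · rintro ⟨h1, h2⟩ w (hw | hw)
    · exact h1 w hw
    · exact h2 w hw

/-- Multiplication on the unitization `Option S`. -/
def omul : Option S → Option S → Option S
  | none, o => o
  | some s, none => some s
  | some s, some a => some (s * a)

theorem thetaApp_omul (w o : Option S) (c : S) :
    thetaApp (omul w o) c = thetaApp w (thetaApp o c) := by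
  cases w <;> cases o <;> simp [thetaApp, omul, mul_assoc]

theorem mem_FsetW_omul (w o : Option S) (c : S) :
    thetaApp o c ∈ FsetW w ↔ c ∈ FsetW (omul w o) := by
  cases w <;> cases o <;>
    simp [FsetW, Fset, thetaApp, omul, mul_assoc]

theorem mem_FsetLam_image (Λ : Finset (Option S)) (o : Option S) (c : S) :
    thetaApp o c ∈ FsetLam Λ ↔ c ∈ FsetLam (Λ.image (fun w => omul w o)) := by
  simp only [mem_FsetLam, Finset.mem_image]
  constructor
  · rintro h w ⟨w', hw', rfl⟩
    exact (mem_FsetW_omul w' o c).1 (h w' hw')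
  · intro h w hw
    exact (mem_FsetW_omul w o c).2 (h _ ⟨w, hw, rfl⟩)

theorem divides_option {r p : S} (h : Divides r p) :
    ∃ o : Option S, ∀ c : S, p * c = r * thetaApp o c := by
  rcases h with rfl | ⟨a, rfl⟩
  · exact ⟨none, fun c => rfl⟩
  · exact ⟨some a, fun c => mul_assoc r a c⟩

theorem thetaImg_none (X : Set S) : thetaImg none X = X := by
  show (fun x => x) '' X = X
  exact Set.image_id' X

theorem mem_thetaImg {u : Option S} {X : Set S} {z : S} :
    z ∈ thetaImg u X ↔ ∃ x ∈ X, thetaApp u x = z := Set.mem_image _ _ _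


theorem inter_theta_F (v : Option S) (M Λ : Finset (Option S)) :
    thetaImg v (FsetLam M) ∩ FsetLam Λ
      = thetaImg v (FsetLam (M ∪ Λ.image (fun w => omul w v))) := by
  ext z
  simp only [Set.mem_inter_iff, mem_thetaImg]
  constructor
  · rintro ⟨⟨y, hy, rfl⟩, hz⟩
    refine ⟨y, ?_, rfl⟩
    rw [mem_FsetLam_union]
    exact ⟨hy, (mem_FsetLam_image Λ v y).1 hz⟩
  · rintro ⟨y, hy, rfl⟩
    rw [mem_FsetLam_union] at hy
    exact ⟨⟨y, hy.1, rfl⟩, (mem_FsetLam_image Λ v y).2 hy.2⟩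

theorem inter_theta_theta (hlc : LeftCancel0 S) {r t p : S} (hp : IsLCM r t p)
    {o₁ o₂ : Option S} (ho₁ : ∀ c : S, p * c = r * thetaApp o₁ c)
    (ho₂ : ∀ c : S, p * c = t * thetaApp o₂ c)
    {Λ M : Finset (Option S)} (hr : (some r) ∈ Λ) (ht : (some t) ∈ M) :
    thetaImg (some r) (FsetLam Λ) ∩ thetaImg (some t) (FsetLam M)
      = thetaImg (some p) (FsetLam (insert (some p)
          (Λ.image (fun w => omul w o₁) ∪ M.image (fun w => omul w o₂)))) := by
  ext z
  simp only [Set.mem_inter_iff, mem_thetaImg]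
  constructor
  · rintro ⟨⟨x, hx, hxz⟩, ⟨y, hy, hyz⟩⟩
    have hz0 : z ≠ 0 := by
      rw [← hxz]
      exact mem_FsetLam.1 hx (some r) hr
    have hzp : z ∈ Set.range (p * ·) := by
      rw [← hp.1]
      exact ⟨⟨x, hxz⟩, ⟨y, hyz⟩⟩
    obtain ⟨c, hc0⟩ := hzp
    have hc : p * c = z := hc0
    have hrx : r * x = z := hxz
    have hty : t * y = z := hyz
    have hx' : x = thetaApp o₁ c := by
      refine hlc r x (thetaApp o₁ c) ?_ (by rw [hrx]; exact hz0)
      rw [hrx, ← hc]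
      exact ho₁ c
    have hy' : y = thetaApp o₂ c := by
      refine hlc t y (thetaApp o₂ c) ?_ (by rw [hty]; exact hz0)
      rw [hty, ← hc]
      exact ho₂ c
    refine ⟨c, ?_, hc⟩
    rw [mem_FsetLam]
    intro w hw
    rcases Finset.mem_insert.1 hw with rfl | hw
    · show p * c ≠ 0
      rw [hc]
      exact hz0
    · rcases Finset.mem_union.1 hw with hw | hw
      · exact mem_FsetLam.1 ((mem_FsetLam_image Λ o₁ c).1 (hx' ▸ hx)) w hw
      · exact mem_FsetLam.1 ((mem_FsetLam_image M o₂ c).1 (hy' ▸ hy)) w hw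
  · rintro ⟨c, hc, rfl⟩
    rw [mem_FsetLam] at hc
    have hc0 : p * c ≠ 0 := hc (some p) (Finset.mem_insert_self _ _)
    have hcu : c ∈ FsetLam (Λ.image (fun w => omul w o₁) ∪ M.image (fun w => omul w o₂)) := by
      rw [mem_FsetLam]
      intro w hw
      exact hc w (Finset.mem_insert_of_mem hw)
    rw [mem_FsetLam_union] at hcu
    constructor
    · exact ⟨thetaApp o₁ c, (mem_FsetLam_image Λ o₁ c).2 hcu.1, (ho₁ c).symm⟩
    · exact ⟨thetaApp o₂ c, (mem_FsetLam_image M o₂ c).2 hcu.2, (ho₂ c).symm⟩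


theorem econs_inter (hlc : LeftCancel0 S) (hlcm : AdmitsLCM S) {X Y : Set S}
    (hX : X ∈ Econs S) (hY : Y ∈ Econs S) : X ∩ Y ∈ Econs S := by
  obtain ⟨Λ, ⟨s₀, hs₀⟩, u, hu, rfl⟩ := hX
  obtain ⟨M, ⟨t₀, ht₀⟩, v, hv, rfl⟩ := hY
  cases u with
  | none =>
    rw [thetaImg_none, Set.inter_comm, inter_theta_F]
    exact ⟨M ∪ Λ.image (fun w => omul w v), ⟨t₀, Finset.mem_union_left _ ht₀⟩, v,
      Finset.mem_union_left _ hv, rfl⟩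
  | some r =>
    cases v with
    | none =>
      rw [thetaImg_none, inter_theta_F]
      exact ⟨Λ ∪ M.image (fun w => omul w (some r)), ⟨s₀, Finset.mem_union_left _ hs₀⟩,
        some r, Finset.mem_union_left _ hu, rfl⟩
    | some t =>
      obtain ⟨p, hp⟩ := hlcm r t
      obtain ⟨o₁, ho₁⟩ := divides_option hp.2.1
      obtain ⟨o₂, ho₂⟩ := divides_option hp.2.2
      rw [inter_theta_theta hlc hp ho₁ ho₂ hu hv]
      exact ⟨_, ⟨p, Finset.mem_insert_self _ _⟩, some p, Finset.mem_insert_self _ _, rfl⟩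

theorem rinvstar_isString (hlc : LeftCancel0 S) {σ : Set S} (hσ : IsString σ) {r x : S}
    (hx : r * x ∈ σ) : IsString (rinvstar r σ) := by
  refine ⟨⟨x, hx⟩, ?_, ?_, ?_⟩
  · intro h
    have h' : r * 0 ∈ σ := h
    rw [mul_zero] at h'
    exact hσ.2.1 h'
  · intro s t hst ht
    have ht' : r * t ∈ σ := ht
    exact hσ.divides_mem (hst.mul_left r) ht'
  · intro s₁ h1 s₂ h2
    have h1' : r * s₁ ∈ σ := h1
    have h2' : r * s₂ ∈ σ := h2
    obtain ⟨s, hs, hd1, hd2⟩ := hσ.directed h1' h2'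
    rcases hd1 with rfl | ⟨u, rfl⟩
    · exact ⟨s₁, h1, divides_rfl s₁, divides_cancel hlc hd2 (hσ.ne_zero hs)⟩
    · have hs' : r * (s₁ * u) ∈ σ := by rw [← mul_assoc]; exact hs
      refine ⟨s₁ * u, hs', Or.inr ⟨u, rfl⟩, ?_⟩
      have hd2' : Divides (r * s₂) (r * (s₁ * u)) := by rw [← mul_assoc]; exact hd2
      exact divides_cancel hlc hd2' (hσ.ne_zero hs')

theorem rstar_rinvstar {σ : Set S} (hσ : IsString σ) {r x : S} (hx : r * x ∈ σ) :
    rstar r (rinvstar r σ) = σ := by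
  ext t
  constructor
  · rintro ⟨s, hs, hd⟩
    have hs' : r * s ∈ σ := hs
    exact hσ.divides_mem hd hs'
  · intro ht
    obtain ⟨s', hs', hd1, hd2⟩ := hσ.directed ht hx
    rcases hd2 with rfl | ⟨u, rfl⟩
    · exact ⟨x, hx, hd1⟩
    · have hmem : r * (x * u) ∈ σ := by rw [← mul_assoc]; exact hs'
      refine ⟨x * u, hmem, ?_⟩
      rw [← mul_assoc]
      exact hd1

theorem fstar_subset_fset {τ : Set S} (hτ : IsString τ) {Λ : Finset (Option S)}
    (h : τ ∈ FstarLam Λ) : ∀ x ∈ τ, x ∈ FsetLam Λ := by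
  intro x hx
  rw [mem_FsetLam]
  intro w hw
  have hm := mem_FstarLam.1 h w hw
  cases w with
  | none => exact hτ.ne_zero hx
  | some s =>
    have hm' : IsString τ ∧ ∀ t ∈ τ, s * t ≠ 0 := hm
    exact hm'.2 x hx

theorem star_iff_ev (hlc : LeftCancel0 S) {σ : Set S} (hσ : IsString σ)
    {Λ : Finset (Option S)} {u : Option S} (hu : u ∈ Λ) :
    σ ∈ thetaStarImg u (FstarLam Λ) ↔ Ev σ (thetaImg u (FsetLam Λ)) := by
  cases u with
  | none =>
    have himg : thetaStarImg none (FstarLam Λ) = FstarLam Λ := by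
      show id '' _ = _
      exact Set.image_id _
    rw [himg, thetaImg_none]
    constructor
    · intro h
      obtain ⟨t₀, ht₀⟩ := hσ.1
      exact ⟨t₀, ht₀, fun t ht _ => fstar_subset_fset hσ h t ht⟩
    · rintro ⟨t₀, ht₀, hev⟩
      rw [mem_FstarLam]
      intro w hw
      cases w with
      | none => exact hσ
      | some s =>
        refine ⟨hσ, ?_⟩
        intro x hx
        obtain ⟨t, htσ, hd0, hdx⟩ := hσ.directed ht₀ hx
        have htF : t ∈ FsetLam Λ := hev t htσ hd0
        exact mul_ne_zero_left hdx (mem_FsetLam.1 htF (some s) hw)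
  | some r =>
    constructor
    · rintro ⟨τ, hτΛ, rfl⟩
      have hτr : IsString τ ∧ ∀ s ∈ τ, r * s ≠ 0 := mem_FstarLam.1 hτΛ (some r) hu
      obtain ⟨s₀, hs₀⟩ := hτr.1.1
      have ht₀ : r * s₀ ∈ thetaStarApp (some r) τ := ⟨s₀, hs₀, divides_rfl _⟩
      refine ⟨r * s₀, ht₀, ?_⟩
      rintro t ⟨s, hs, hts⟩ hd
      rcases hd with rfl | ⟨y, rfl⟩
      · exact ⟨s₀, fstar_subset_fset hτr.1 hτΛ s₀ hs₀, rfl⟩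
      · have hts' : Divides (r * (s₀ * y)) (r * s) := by rw [← mul_assoc]; exact hts
        have hds : Divides (s₀ * y) s := divides_cancel hlc hts' (hτr.2 s hs)
        have hmem : s₀ * y ∈ τ := hτr.1.divides_mem hds hs
        exact ⟨s₀ * y, fstar_subset_fset hτr.1 hτΛ _ hmem, (mul_assoc r s₀ y).symm⟩
    · rintro ⟨t₀, ht₀, hev⟩
      obtain ⟨x₀, hx₀, hx₀t⟩ := hev t₀ ht₀ (divides_rfl _)
      have hrx : r * x₀ ∈ σ := by
        rw [show r * x₀ = t₀ from hx₀t]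
        exact ht₀
      have hstr : IsString (rinvstar r σ) := rinvstar_isString hlc hσ hrx
      refine ⟨rinvstar r σ, ?_, rstar_rinvstar hσ hrx⟩
      rw [mem_FstarLam]
      intro w hw
      cases w with
      | none => exact hstr
      | some s =>
        refine ⟨hstr, ?_⟩
        intro x hx
        have hx' : r * x ∈ σ := hx
        obtain ⟨t, htσ, hd0, hdx⟩ := hσ.directed ht₀ hx'
        obtain ⟨y, hyΛ, hyt⟩ := hev t htσ hd0
        have hyt' : r * y = t := hyt
        have hry0 : r * y ≠ 0 := mem_FsetLam.1 hyΛ (some r) hu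
        rw [← hyt'] at hdx
        have hdxy : Divides x y := divides_cancel hlc hdx hry0
        exact mul_ne_zero_left hdxy (mem_FsetLam.1 hyΛ (some s) hw)

theorem eset_eq_theta (s : S) :
    Eset s = thetaImg (some s) (FsetLam {some s}) := by
  ext z
  constructor
  · rintro ⟨x, rfl, hx⟩
    refine ⟨x, ?_, rfl⟩
    rw [mem_FsetLam]
    intro w hw
    rw [Finset.mem_singleton] at hw
    subst hw
    exact hx
  · rintro ⟨x, hx, rfl⟩
    exact ⟨x, rfl, mem_FsetLam.1 hx (some s) (Finset.mem_singleton_self _)⟩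

theorem eset_mem_econs (s : S) : Eset s ∈ Econs S :=
  ⟨{some s}, ⟨s, Finset.mem_singleton_self _⟩, some s, Finset.mem_singleton_self _,
    eset_eq_theta s⟩

theorem phi_iff (hlc : LeftCancel0 S) {σ : Set S} (hσ : IsString σ) {X : Set S} :
    phiStr σ X ↔ X ∈ Econs S ∧ Ev σ X := by
  constructor
  · rintro ⟨Λ, hs, u, hu, rfl, hstar⟩
    exact ⟨⟨Λ, hs, u, hu, rfl⟩, (star_iff_ev hlc hσ hu).1 hstar⟩
  · rintro ⟨⟨Λ, hs, u, hu, rfl⟩, hev⟩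
    exact ⟨Λ, hs, u, hu, rfl, (star_iff_ev hlc hσ hu).2 hev⟩

/-- If `σ` is an open, maximal string in a 0-left-cancellative semigroup admitting least
common multiples, then `φ_σ` is an ultra-character of `𝔈(S)`. -/
theorem open_maximal_string_ultra (hlc : LeftCancel0 S) (hlcm : AdmitsLCM S)
    (σ : Set S) (hσ : IsString σ) (hopen : σ = strInterior σ)
    (hmax : ∀ μ : Set S, IsString μ → σ ⊆ μ → σ = μ) :
    IsUltraCharacter (Econs S) (phiStr σ) := by
  have hopen' : ∀ t ∈ σ, ∃ c, t * c ∈ σ := by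
    intro t ht
    rw [hopen] at ht
    exact ht
  have hphiE : ∀ t ∈ σ, phiStr σ (Eset t) := by
    intro t ht
    obtain ⟨c, hc⟩ := hopen' t ht
    refine (phi_iff hlc hσ).2 ⟨eset_mem_econs t, ⟨t * c, hc, ?_⟩⟩
    rintro t' ht' hd
    rcases hd with rfl | ⟨y, rfl⟩
    · exact ⟨c, rfl, hσ.ne_zero hc⟩
    · refine ⟨c * y, mul_assoc t c y, ?_⟩
      rw [← mul_assoc]
      exact hσ.ne_zero ht'
  have hchar : IsCharacter (Econs S) (phiStr σ) := by
    refine ⟨?_, ?_, ?_⟩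
    · intro h
      exact ((phi_iff hlc hσ).1 h).2.not_empty
    · obtain ⟨t₀, ht₀⟩ := hσ.1
      exact ⟨Eset t₀, eset_mem_econs t₀, hphiE t₀ ht₀⟩
    · intro X hX Y hY
      rw [phi_iff hlc hσ, phi_iff hlc hσ, phi_iff hlc hσ]
      constructor
      · rintro ⟨_, hev⟩
        exact ⟨⟨hX, hev.mono Set.inter_subset_left⟩, ⟨hY, hev.mono Set.inter_subset_right⟩⟩
      · rintro ⟨⟨_, hevX⟩, ⟨_, hevY⟩⟩
        exact ⟨econs_inter hlc hlcm hX hY, hevX.inter hσ hevY⟩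
  refine ⟨hchar, ?_⟩
  intro ψ hψ hle X hX hψX
  have hψempty : ¬ ψ ∅ := hψ.1
  have hψmul := hψ.2.2
  have habs : ∀ {Y : Set S}, Y ∈ Econs S → ψ Y → ∀ s : S, Y ⊆ Eset s → ψ (Eset s) := by
    intro Y hY hpY s hsub
    have h1 := (hψmul Y hY (Eset s) (eset_mem_econs s)).1
    rw [Set.inter_eq_left.2 hsub] at h1
    exact (h1 hpY).2
  have hnonempty : ∀ {Y Z : Set S}, Y ∈ Econs S → Z ∈ Econs S → ψ Y → ψ Z →
      (Y ∩ Z).Nonempty := by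
    intro Y Z hY hZ h1 h2
    have h3 : ψ (Y ∩ Z) := (hψmul Y hY Z hZ).2 ⟨h1, h2⟩
    rcases Set.eq_empty_or_nonempty (Y ∩ Z) with he | hne
    · rw [he] at h3
      exact absurd h3 hψempty
    · exact hne
  have hσsub : σ ⊆ sigmaOf ψ := fun t ht => hle (Eset t) (eset_mem_econs t) (hphiE t ht)
  have hstr : IsString (sigmaOf ψ) := by
    obtain ⟨t₀, ht₀⟩ := hσ.1
    refine ⟨⟨t₀, hσsub ht₀⟩, ?_, ?_, ?_⟩
    · intro h0
      have h0' : ψ (Eset (0 : S)) := h0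
      have hE0 : Eset (0 : S) = ∅ := by
        ext z
        simp [Eset]
      rw [hE0] at h0'
      exact hψempty h0'
    · intro s t hd ht
      have ht' : ψ (Eset t) := ht
      have hsub : Eset t ⊆ Eset s := by
        rintro z ⟨x, rfl, hzx⟩
        rcases hd with rfl | ⟨u, rfl⟩
        · exact ⟨x, rfl, hzx⟩
        · refine ⟨u * x, mul_assoc s u x, ?_⟩
          rw [← mul_assoc]
          exact hzx
      exact habs (eset_mem_econs t) ht' s hsub
    · intro s₁ h1 s₂ h2
      have h1' : ψ (Eset s₁) := h1
      have h2' : ψ (Eset s₂) := h2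
      obtain ⟨p, hp⟩ := hlcm s₁ s₂
      have hsub : Eset s₁ ∩ Eset s₂ ⊆ Eset p := by
        rintro z ⟨⟨x, rfl, hx⟩, ⟨y, hy, hy0⟩⟩
        have hz : s₁ * x ∈ Set.range (p * ·) := by
          rw [← hp.1]
          exact ⟨⟨x, rfl⟩, ⟨y, hy.symm⟩⟩
        obtain ⟨c, hc0⟩ := hz
        have hc : p * c = s₁ * x := hc0
        refine ⟨c, hc.symm, ?_⟩
        rw [hc]
        exact hx
      have hψp : ψ (Eset p) :=
        habs (econs_inter hlc hlcm (eset_mem_econs s₁) (eset_mem_econs s₂))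
          ((hψmul _ (eset_mem_econs s₁) _ (eset_mem_econs s₂)).2 ⟨h1', h2'⟩) p hsub
      exact ⟨p, hψp, hp.2.1, hp.2.2⟩
  have hσeq : σ = sigmaOf ψ := hmax _ hstr hσsub
  obtain ⟨Λ, ⟨s₀, hs₀⟩, u, hu, rfl⟩ := hX
  refine (phi_iff hlc hσ).2 ⟨⟨Λ, ⟨s₀, hs₀⟩, u, hu, rfl⟩, ?_⟩
  cases u with
  | none =>
    rw [thetaImg_none] at hψX ⊢
    obtain ⟨t₀, ht₀⟩ := hσ.1
    refine ⟨t₀, ht₀, fun t ht _ => ?_⟩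
    have hψt : ψ (Eset t) := by
      rw [hσeq] at ht
      exact ht
    have hFmem : FsetLam Λ ∈ Econs S := ⟨Λ, ⟨s₀, hs₀⟩, none, hu, (thetaImg_none _).symm⟩
    obtain ⟨z, hz1, hz2⟩ := hnonempty hFmem (eset_mem_econs t) hψX hψt
    obtain ⟨c, hzc, hc0⟩ := hz2
    subst hzc
    rw [mem_FsetLam] at hz1 ⊢
    intro w hw
    have hzw := hz1 w hw
    cases w with
    | none => exact hσ.ne_zero ht
    | some s =>
      show s * t ≠ 0
      intro h0
      have hzw' : s * (t * c) ≠ 0 := hzw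
      exact hzw' (by rw [← mul_assoc, h0, zero_mul])
  | some r =>
    have hXEr : thetaImg (some r) (FsetLam Λ) ⊆ Eset r := by
      rintro z ⟨x, hxΛ, rfl⟩
      exact ⟨x, rfl, mem_FsetLam.1 hxΛ (some r) hu⟩
    have hψEr : ψ (Eset r) := habs ⟨Λ, ⟨s₀, hs₀⟩, some r, hu, rfl⟩ hψX r hXEr
    have hrσ : r ∈ σ := by
      rw [hσeq]
      exact hψEr
    obtain ⟨c, hc⟩ := hopen' r hrσ
    refine ⟨r * c, hc, ?_⟩
    intro t ht hd
    have hx : ∃ x : S, t = r * x := by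
      rcases hd with rfl | ⟨y, rfl⟩
      · exact ⟨c, rfl⟩
      · exact ⟨c * y, mul_assoc r c y⟩
    obtain ⟨x, rfl⟩ := hx
    have hψt : ψ (Eset (r * x)) := by
      rw [hσeq] at ht
      exact ht
    obtain ⟨z, hz1, hz2⟩ := hnonempty ⟨Λ, ⟨s₀, hs₀⟩, some r, hu, rfl⟩
      (eset_mem_econs (r * x)) hψX hψt
    obtain ⟨y, hyΛ, hyz⟩ := hz1
    obtain ⟨d, hzd, hd0⟩ := hz2
    have hyz' : r * y = z := hyz
    have heq : r * y = r * (x * d) := by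
      rw [hyz', hzd, mul_assoc]
    have hyxd : y = x * d := by
      refine hlc r y (x * d) heq ?_
      rw [hyz', hzd]
      exact hd0
    refine ⟨x, ?_, rfl⟩
    rw [mem_FsetLam]
    intro w hw
    have hyw := mem_FsetLam.1 hyΛ w hw
    cases w with
    | none =>
      show x ≠ 0
      intro h0
      refine hσ.ne_zero ht ?_
      rw [h0, mul_zero]
    | some s =>
      show s * x ≠ 0
      intro h0
      have hyw' : s * y ≠ 0 := hyw
      exact hyw' (by rw [hyxd, ← mul_assoc, h0, zero_mul])

end ExSt
end

section
/- Let S be a 0-left-cancellative semigroup with zero admitting least common multiples, and let φ be a character of 𝔈(S). If σ_φ = {s ∈ S : φ(E_s) = 1} is nonempty, then σ_φ is a string in S; moreover σ_φ is closed under least common multiples: if s, t ∈ σ_φ and r is a least common multiple of s and t, then r ∈ σ_φ. -/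
namespace ExSt

variable {S : Type*} [SemigroupWithZero S]

/-- If `φ` is a character of `𝔈(S)` and `σ_φ` is nonempty, then `σ_φ` is a string, closed
under least common multiples. -/
theorem sigmaOf_is_string (hlc : LeftCancel0 S) (hlcm : AdmitsLCM S)
    (φ : Set S → Prop) (hφ : IsCharacter (Econs S) φ) (hne : (sigmaOf φ).Nonempty) :
    IsString (sigmaOf φ) ∧
      ∀ s ∈ sigmaOf φ, ∀ t ∈ sigmaOf φ, ∀ r : S, IsLCM s t r → r ∈ sigmaOf φ := by
  obtain ⟨hne0, -, hmul⟩ := hφ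
  have hE : ∀ s : S, Eset s ∈ Econs S := fun s => by
    refine ⟨{some s}, ⟨s, Finset.mem_singleton_self _⟩, some s, Finset.mem_singleton_self _, ?_⟩
    ext y
    simp only [Eset, thetaImg, thetaApp, FsetLam, Finset.mem_singleton, Set.iInter_iInter_eq_left,
      FsetW, Fset, Set.mem_image, Set.mem_setOf_eq]
    constructor
    · rintro ⟨x, rfl, hx⟩; exact ⟨x, hx, rfl⟩
    · rintro ⟨x, hx, rfl⟩; exact ⟨x, rfl, hx⟩
  -- divisibility closure
  have hdiv : ∀ s t : S, Divides s t → t ∈ sigmaOf φ → s ∈ sigmaOf φ := by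
    rintro s t (rfl | ⟨u, rfl⟩) ht
    · exact ht
    · have hsub : Eset (s * u) ⊆ Eset s := by
        rintro y ⟨x, rfl, hx⟩
        exact ⟨u * x, by rw [mul_assoc], by rw [← mul_assoc]; exact hx⟩
      have hcap : Eset s ∩ Eset (s * u) = Eset (s * u) :=
        Set.inter_eq_self_of_subset_right hsub
      have := (hmul _ (hE s) _ (hE (s * u))).mp (by rw [hcap]; exact ht)
      exact this.1
  -- LCM closure
  have hlcmcl : ∀ s ∈ sigmaOf φ, ∀ t ∈ sigmaOf φ, ∀ r : S, IsLCM s t r → r ∈ sigmaOf φ := by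
    rintro s hs t ht r ⟨hr, -, -⟩
    have hcap : Eset s ∩ Eset t = Eset r := by
      ext y
      constructor
      · rintro ⟨⟨x, rfl, hx⟩, ⟨x', hx', hx'0⟩⟩
        have hmem : s * x ∈ Set.range (r * ·) := by
          rw [← hr]; exact ⟨⟨x, rfl⟩, ⟨x', hx'.symm⟩⟩
        obtain ⟨z, hz⟩ := hmem
        exact ⟨z, hz.symm, by rw [show r * z = s * x from hz]; exact hx⟩
      · rintro ⟨x, rfl, hx⟩
        have hmem : r * x ∈ Set.range (s * ·) ∩ Set.range (t * ·) := by
          rw [hr]; exact ⟨x, rfl⟩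
        obtain ⟨⟨a, ha⟩, ⟨b, hb⟩⟩ := hmem
        exact ⟨⟨a, ha.symm, by rw [show s * a = r * x from ha]; exact hx⟩,
          ⟨b, hb.symm, by rw [show t * b = r * x from hb]; exact hx⟩⟩
    have := (hmul _ (hE s) _ (hE t)).mpr ⟨hs, ht⟩
    rw [hcap] at this
    exact this
  refine ⟨⟨hne, ?_, hdiv, ?_⟩, hlcmcl⟩
  · intro h0
    have : Eset (0 : S) = ∅ := by
      ext y; simp [Eset]
    rw [sigmaOf, Set.mem_setOf_eq, this] at h0
    exact hne0 h0
  · intro s₁ h₁ s₂ h₂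
    obtain ⟨r, hr⟩ := hlcm s₁ s₂
    exact ⟨r, hlcmcl s₁ h₁ s₂ h₂ r hr, hr.2⟩

end ExSt
end

section
/- Let S be a 0-left-cancellative semigroup with zero, let σ be a string in S, and let r ∈ S be such that r·s ≠ 0 for every s ∈ σ. Then r*σ = {t ∈ S : t ∥ r·s for some s ∈ σ} is a string, r*σ has nonempty intersection with rS, and {r·s : s ∈ σ} ⊆ r*σ. -/
namespace ExSt

variable {S : Type*} [SemigroupWithZero S]

/-- If `σ` is a string and `r·s ≠ 0` for all `s ∈ σ`, then `r*σ` is a string meeting `rS`,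
and `rσ ⊆ r*σ`. -/
theorem rstar_is_string (hlc : LeftCancel0 S) (σ : Set S) (hσ : IsString σ)
    (r : S) (hr : ∀ s ∈ σ, r * s ≠ 0) :
    IsString (rstar r σ) ∧ (rstar r σ ∩ Set.range (r * ·)).Nonempty ∧
      ∀ s ∈ σ, r * s ∈ rstar r σ := by
  obtain ⟨⟨s₀, hs₀⟩, h0, hdiv, hdir⟩ := hσ
  have htrans : ∀ a b c : S, Divides a b → Divides b c → Divides a c := by
    rintro a b c (rfl | ⟨u, rfl⟩) (h | ⟨v, h⟩)
    · exact Or.inl h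
    · exact Or.inr ⟨v, h⟩
    · exact Or.inr ⟨u, h⟩
    · exact Or.inr ⟨u * v, by rw [h, mul_assoc]⟩
  have hmul : ∀ a b : S, Divides a b → Divides (r * a) (r * b) := by
    rintro a b (rfl | ⟨u, rfl⟩)
    · exact Or.inl rfl
    · exact Or.inr ⟨u, (mul_assoc r a u).symm⟩
  have hmem : ∀ s ∈ σ, r * s ∈ rstar r σ := fun s hs => ⟨s, hs, Or.inl rfl⟩
  refine ⟨⟨⟨r * s₀, hmem s₀ hs₀⟩, ?_, ?_, ?_⟩, ⟨r * s₀, hmem s₀ hs₀, s₀, rfl⟩, hmem⟩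
  · rintro ⟨s, hs, (h | ⟨u, h⟩)⟩
    · exact hr s hs h
    · exact hr s hs (by rw [h, zero_mul])
  · rintro a b hab ⟨s, hs, hb⟩
    exact ⟨s, hs, htrans a b (r * s) hab hb⟩
  · rintro t₁ ⟨s₁, hs₁, h₁⟩ t₂ ⟨s₂, hs₂, h₂⟩
    obtain ⟨s, hs, d₁, d₂⟩ := hdir s₁ hs₁ s₂ hs₂
    exact ⟨r * s, hmem s hs, htrans _ _ _ h₁ (hmul _ _ d₁), htrans _ _ _ h₂ (hmul _ _ d₂)⟩


end ExSt
end

section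
/- Let S be a 0-left-cancellative semigroup with zero, let σ be a string in S, and let r ∈ S be such that σ ∩ rS ≠ ∅. Then r⁻¹*σ = {t ∈ S : r·t ∈ σ} is a string, and r·t ≠ 0 for every t ∈ r⁻¹*σ. -/
namespace ExSt

variable {S : Type*} [SemigroupWithZero S]

/-- If `σ` is a string with `σ ∩ rS ≠ ∅`, then `r⁻¹*σ` is a string and `r·t ≠ 0` for all
`t ∈ r⁻¹*σ`. -/
theorem rinvstar_is_string (hlc : LeftCancel0 S) (σ : Set S) (hσ : IsString σ)
    (r : S) (hr : (σ ∩ Set.range (r * ·)).Nonempty) :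
    IsString (rinvstar r σ) ∧ ∀ t ∈ rinvstar r σ, r * t ≠ 0 := by
  obtain ⟨hne, h0, hdown, hdir⟩ := hσ
  have hne0 : ∀ t ∈ rinvstar r σ, r * t ≠ 0 := by
    intro t ht h
    exact h0 (h ▸ ht)
  refine ⟨⟨?_, ?_, ?_, ?_⟩, hne0⟩
  · obtain ⟨s, hs, x, hx⟩ := hr
    refine ⟨x, show r * x ∈ σ from ?_⟩
    simp only at hx
    rwa [hx]
  · intro h
    have : r * (0 : S) ∈ σ := h
    rw [mul_zero] at this
    exact h0 this
  · intro s t hst ht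
    rcases hst with rfl | ⟨u, rfl⟩
    · exact ht
    · exact hdown (r * s) (r * (s * u)) (Or.inr ⟨u, by rw [mul_assoc]⟩) ht
  · intro t₁ ht₁ t₂ ht₂
    obtain ⟨s, hs, hd₁, hd₂⟩ := hdir (r * t₁) ht₁ (r * t₂) ht₂
    have hs0 : s ≠ 0 := fun h => h0 (h ▸ hs)
    -- get t with s = r * t and t₁ ∥ t
    obtain ⟨t, rfl, hdt₁⟩ : ∃ t : S, s = r * t ∧ Divides t₁ t := by
      rcases hd₁ with rfl | ⟨u, rfl⟩
      · exact ⟨t₁, rfl, Or.inl rfl⟩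
      · exact ⟨t₁ * u, by rw [mul_assoc], Or.inr ⟨u, rfl⟩⟩
    refine ⟨t, hs, hdt₁, ?_⟩
    rcases hd₂ with h | ⟨v, h⟩
    · exact Or.inl (hlc r t t₂ h hs0)
    · exact Or.inr ⟨v, hlc r t (t₂ * v) (by rw [h, mul_assoc]) hs0⟩

end ExSt
end

section
/- Let S be a 0-left-cancellative semigroup with zero, let r ∈ S, and let σ be a maximal string in S such that r·s ≠ 0 for every s ∈ σ. Then the string r*σ = {t ∈ S : t ∥ r·s for some s ∈ σ} is a maximal string. -/
namespace ExSt

variable {S : Type*} [SemigroupWithZero S]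

/-- If `σ` is a maximal string and `r·s ≠ 0` for all `s ∈ σ`, then `r*σ` is a maximal
string. -/
theorem rstar_maximal (hlc : LeftCancel0 S) (r : S) (σ : Set S) (hσ : IsString σ)
    (hmax : ∀ μ : Set S, IsString μ → σ ⊆ μ → σ = μ) (hr : ∀ s ∈ σ, r * s ≠ 0) :
    IsString (rstar r σ) ∧ ∀ μ : Set S, IsString μ → rstar r σ ⊆ μ → rstar r σ = μ := by
  obtain ⟨⟨s₀, hs₀⟩, h0σ, hdown, hdir⟩ := hσ
  have dtrans : ∀ a b c : S, Divides a b → Divides b c → Divides a c := by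
    rintro a b c (rfl | ⟨u, rfl⟩) (rfl | ⟨v, rfl⟩)
    · exact Or.inl rfl
    · exact Or.inr ⟨v, rfl⟩
    · exact Or.inr ⟨u, rfl⟩
    · exact Or.inr ⟨u * v, by rw [mul_assoc]⟩
  have dmul : ∀ a b : S, Divides a b → Divides (r * a) (r * b) := by
    rintro a b (rfl | ⟨u, rfl⟩)
    · exact Or.inl rfl
    · exact Or.inr ⟨u, by rw [mul_assoc]⟩
  have hsub : ∀ s ∈ σ, r * s ∈ rstar r σ := fun s hs => ⟨s, hs, Or.inl rfl⟩
  have hstr : IsString (rstar r σ) := by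
    refine ⟨⟨r * s₀, hsub s₀ hs₀⟩, ?_, ?_, ?_⟩
    · rintro ⟨s, hs, (h | ⟨u, h⟩)⟩
      · exact hr s hs h
      · exact hr s hs (by rw [h, zero_mul])
    · rintro a b hab ⟨s, hs, hb⟩
      exact ⟨s, hs, dtrans a b (r * s) hab hb⟩
    · rintro a ⟨s₁, hs₁, ha⟩ b ⟨s₂, hs₂, hb⟩
      obtain ⟨s, hs, h1, h2⟩ := hdir s₁ hs₁ s₂ hs₂
      exact ⟨r * s, hsub s hs, dtrans a (r * s₁) (r * s) ha (dmul _ _ h1),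
        dtrans b (r * s₂) (r * s) hb (dmul _ _ h2)⟩
  refine ⟨hstr, fun μ hμ hsubμ => ?_⟩
  obtain ⟨hμne, h0μ, hμdown, hμdir⟩ := hμ
  -- ρ = {x | r * x ∈ μ} is a string containing σ, hence equals σ
  set ρ : Set S := {x | r * x ∈ μ} with hρdef
  have hσρ : σ ⊆ ρ := fun s hs => hsubμ (hsub s hs)
  have hρstr : IsString ρ := by
    refine ⟨⟨s₀, hσρ hs₀⟩, ?_, ?_, ?_⟩
    · intro h0
      have : r * (0 : S) ∈ μ := h0
      rw [mul_zero] at this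
      exact h0μ this
    · intro a b hab hb
      exact hμdown (r * a) (r * b) (dmul a b hab) hb
    · intro a ha b hb
      obtain ⟨m, hm, h1, h2⟩ := hμdir (r * a) ha (r * b) hb
      have hm0 : m ≠ 0 := fun h => h0μ (h ▸ hm)
      obtain (rfl | ⟨u, rfl⟩) := h1
      · refine ⟨a, ha, Or.inl rfl, ?_⟩
        obtain (h | ⟨v, h⟩) := h2
        · exact Or.inl (hlc r b a h.symm (by rw [← h]; exact hm0)).symm
        · exact Or.inr ⟨v, hlc r a (b * v) (by rw [← mul_assoc, ← h]) hm0⟩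
      · have hmem : a * u ∈ ρ := by
          show r * (a * u) ∈ μ
          rw [← mul_assoc]; exact hm
        refine ⟨a * u, hmem, Or.inr ⟨u, rfl⟩, ?_⟩
        have hm0' : r * (a * u) ≠ 0 := by rw [← mul_assoc]; exact hm0
        obtain (h | ⟨v, h⟩) := h2
        · exact Or.inl (hlc r b (a * u) (by rw [← h, mul_assoc]) (by rw [← h]; exact hm0)).symm
        · exact Or.inr ⟨v, hlc r (a * u) (b * v) (by rw [← mul_assoc, h, mul_assoc]) hm0'⟩
  have hρeq : σ = ρ := hmax ρ hρstr hσρ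
  refine Set.Subset.antisymm hsubμ fun t ht => ?_
  obtain ⟨m, hm, h1, h2⟩ := hμdir t ht (r * s₀) (hsubμ (hsub s₀ hs₀))
  obtain (h | ⟨u, h⟩) := h2
  · exact ⟨s₀, hs₀, h ▸ h1⟩
  · have hmem : s₀ * u ∈ ρ := by
      show r * (s₀ * u) ∈ μ
      rw [← mul_assoc, ← h]; exact hm
    exact ⟨s₀ * u, hρeq.symm ▸ hmem, by rwa [← mul_assoc, ← h]⟩

end ExSt
end

section
/- Let S be a 0-left-cancellative semigroup with zero which is right reductive, and suppose s ∈ S satisfies sS = S. Then S is unital and s is invertible: there exist e, s' ∈ S such that e·t = t·e = t for all t ∈ S, and s·s' = s'·s = e. -/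
namespace ExSt

variable {S : Type*} [SemigroupWithZero S]

/-- In a right reductive 0-left-cancellative semigroup, `sS = S` implies `S` is unital and
`s` is invertible. -/
theorem sS_eq_S_implies_unit (hlc : LeftCancel0 S)
    (hrr : ∀ s t : S, (∀ x : S, s * x = t * x) → s = t)
    (s : S) (hs : Set.range (s * ·) = Set.univ) :
    ∃ e s' : S, (∀ t : S, e * t = t ∧ t * e = t) ∧ s * s' = e ∧ s' * s = e := by
  by_cases htriv : ∀ x : S, x = 0
  · refine ⟨0, 0, fun t => ?_, by simp, by simp⟩
    rw [htriv t]; simp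
  · push_neg at htriv
    obtain ⟨x0, hx0⟩ := htriv
    have surj : ∀ t : S, ∃ u : S, s * u = t := by
      intro t
      have ht : t ∈ Set.range (s * ·) := hs ▸ Set.mem_univ t
      obtain ⟨u, hu⟩ := ht
      exact ⟨u, hu⟩
    have hsne : s ≠ 0 := by
      rintro rfl
      obtain ⟨u, hu⟩ := surj x0
      exact hx0 (by simpa using hu.symm)
    obtain ⟨e, he⟩ := surj s
    have hss : s * s ≠ 0 := by
      intro h
      obtain ⟨u, hu⟩ := surj e
      apply hsne
      calc s = s * e := he.symm
        _ = s * (s * u) := by rw [hu]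
        _ = (s * s) * u := (mul_assoc s s u).symm
        _ = 0 := by rw [h, zero_mul]
    have hes : e * s = s := by
      have h1 : s * (e * s) = s * s := by rw [← mul_assoc, he]
      exact hlc s (e * s) s h1 (h1 ▸ hss)
    have hleft : ∀ t : S, e * t = t := by
      intro t
      obtain ⟨u, hu⟩ := surj t
      rw [← hu, ← mul_assoc, hes]
    have hright : ∀ t : S, t * e = t := by
      intro t
      apply hrr
      intro x
      rw [mul_assoc, hleft x]
    obtain ⟨s', hs'⟩ := surj e
    refine ⟨e, s', fun t => ⟨hleft t, hright t⟩, hs', ?_⟩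
    have h1 : s * (s' * s) = s * e := by
      rw [← mul_assoc, hs', hes, hright s]
    have hne : s * (s' * s) ≠ 0 := by rw [h1, hright s]; exact hsne
    exact hlc s (s' * s) e h1 hne

end ExSt
end

section
/- Let S be a 0-left-cancellative semigroup with zero which is right reductive, and let e, f ∈ S be idempotents with e ≠ f. Then e·f = 0. -/
namespace ExSt

variable {S : Type*} [SemigroupWithZero S]

/-- In a right reductive 0-left-cancellative semigroup, distinct idempotents are
orthogonal. -/
theorem distinct_idempotents_orthogonal (hlc : LeftCancel0 S)
    (hrr : ∀ s t : S, (∀ x : S, s * x = t * x) → s = t)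
    (e f : S) (he : e * e = e) (hf : f * f = f) (hef : e ≠ f) :
    e * f = 0 := by
  by_contra hef0
  have key : ∀ g : S, g * g = g → ∀ x : S, g * x ≠ 0 → g * x = x := by
    intro g hg x hx
    apply hlc g (g * x) x
    · rw [← mul_assoc, hg]
    · rw [← mul_assoc, hg]; exact hx
  have hef' : e * f = f := key e he f hef0
  have hfne : f ≠ 0 := by
    intro h; apply hef0; rw [h, mul_zero]
  have hfe0 : f * e ≠ 0 := by
    intro h
    apply hfne
    have : (f * e) * f = f := by rw [mul_assoc, hef', hf]
    rw [h, zero_mul] at this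
    exact this.symm
  have hfe' : f * e = e := key f hf e hfe0
  apply hef
  apply hrr
  intro x
  by_cases hex : e * x = 0
  · by_cases hfx : f * x = 0
    · rw [hex, hfx]
    · exfalso
      have hx : f * x = x := key f hf x hfx
      have h2 : e * x = f * x := by
        conv_lhs => rw [← hx, ← mul_assoc, hef']
      rw [h2] at hex
      exact hfx hex
  · have : f * x = e * x := by
      have hx : e * x = x := key e he x hex
      conv_lhs => rw [← hx, ← mul_assoc, hfe']
    rw [this]

end ExSt
end

section
/- Let A be an alphabet (an arbitrary type) and let L be a nonempty set of finite words over A of positive length which is closed under prefixes and suffixes: whenever α and β are words of positive length with the concatenation αβ ∈ L, then α ∈ L and β ∈ L. Let S = L ∪ {0} be the semigroup with zero whose product is α·β = αβ if α, β ∈ L and αβ ∈ L, and 0 otherwise. Then S admits least common multiples: for all s, t ∈ S there exists r ∈ S with sS ∩ tS = rS, s ∥ r and t ∥ r. -/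
namespace ExSt

/-- The language semigroup `S = L ∪ {0}`, with `none` playing the role of `0`. -/
abbrev LangSG (A : Type*) (L : Set (List A)) : Type _ := Option {w : List A // w ∈ L}

open Classical in
/-- Multiplication on `S = L ∪ {0}`: concatenation if the result lies in `L`, `0`
otherwise. -/
noncomputable def langMul {A : Type*} (L : Set (List A)) :
    LangSG A L → LangSG A L → LangSG A L
  | some a, some b => if h : a.1 ++ b.1 ∈ L then some ⟨a.1 ++ b.1, h⟩ else none
  | _, _ => none

/-- Divisibility in the language semigroup. -/
def langDivides {A : Type*} (L : Set (List A)) (s t : LangSG A L) : Prop :=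
  t = s ∨ ∃ u : LangSG A L, t = langMul L s u

lemma mul_none' {A : Type*} (L : Set (List A)) (s : LangSG A L) :
    langMul L s none = none := by cases s <;> rfl

lemma none_mul' {A : Type*} (L : Set (List A)) (s : LangSG A L) :
    langMul L none s = none := by cases s <;> rfl

lemma range_none {A : Type*} (L : Set (List A)) :
    Set.range (langMul L (none : LangSG A L)) = {none} := by
  ext w
  simp only [Set.mem_range, Set.mem_singleton_iff]
  constructor
  · rintro ⟨u, rfl⟩; exact none_mul' L u
  · rintro rfl; exact ⟨none, rfl⟩

lemma none_mem_range {A : Type*} (L : Set (List A)) (s : LangSG A L) :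
    (none : LangSG A L) ∈ Set.range (langMul L s) := ⟨none, mul_none' L s⟩

lemma prefix_of_mem_range {A : Type*} {L : Set (List A)} {a c : {w : List A // w ∈ L}}
    (h : some c ∈ Set.range (langMul L (some a))) : a.1 <+: c.1 := by
  obtain ⟨u, hu⟩ := h
  cases u with
  | none => simp [mul_none'] at hu
  | some u' =>
    simp only [langMul] at hu
    by_cases h' : a.1 ++ u'.1 ∈ L
    · rw [dif_pos h'] at hu
      cases hu
      exact ⟨u'.1, rfl⟩
    · rw [dif_neg h'] at hu
      cases hu

/-- If `b = a ++ x` with `x ≠ []`, then `bS ⊆ aS`. -/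
lemma range_subset {A : Type*} {L : Set (List A)}
    (hpos : ∀ w ∈ L, w ≠ []) (hcl : ∀ α β : List A, α ≠ [] → β ≠ [] → α ++ β ∈ L → α ∈ L ∧ β ∈ L)
    {a b : {w : List A // w ∈ L}} {x : List A} (hx : x ≠ []) (hb : a.1 ++ x = b.1) :
    Set.range (langMul L (some b)) ⊆ Set.range (langMul L (some a)) := by
  rintro w ⟨v, rfl⟩
  cases v with
  | none => rw [mul_none']; exact none_mem_range L _
  | some v' =>
    by_cases h : b.1 ++ v'.1 ∈ L
    · have hassoc : a.1 ++ (x ++ v'.1) = b.1 ++ v'.1 := by rw [← hb, List.append_assoc]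
      have hxv : x ++ v'.1 ∈ L :=
        (hcl a.1 (x ++ v'.1) (hpos _ a.2)
          (fun hn => hx (List.append_eq_nil_iff.mp hn).1) (hassoc ▸ h)).2
      refine ⟨some ⟨x ++ v'.1, hxv⟩, ?_⟩
      simp only [langMul]
      rw [dif_pos (hassoc ▸ h), dif_pos h]
      · congr 1
        exact Subtype.ext hassoc
    · refine ⟨none, ?_⟩
      rw [mul_none']
      simp [langMul, h]

/-- The language semigroup admits least common multiples. -/
theorem language_semigroup_lcm {A : Type*} (L : Set (List A)) (hne : L.Nonempty)
    (hpos : ∀ w ∈ L, w ≠ []) (hcl : ∀ α β : List A, α ≠ [] → β ≠ [] → α ++ β ∈ L → α ∈ L ∧ β ∈ L) :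
    ∀ s t : LangSG A L, ∃ r : LangSG A L,
      (Set.range (langMul L s) ∩ Set.range (langMul L t) = Set.range (langMul L r)) ∧
      langDivides L s r ∧ langDivides L t r := by
  intro s t
  cases s with
  | none =>
    refine ⟨none, ?_, Or.inl rfl, Or.inr ⟨none, (mul_none' L t).symm⟩⟩
    rw [range_none]
    ext w
    constructor
    · rintro ⟨hw, _⟩; exact hw
    · rintro rfl; exact ⟨rfl, none_mem_range L t⟩
  | some a =>
  cases t with
  | none =>
    refine ⟨none, ?_, Or.inr ⟨none, (mul_none' L _).symm⟩, Or.inl rfl⟩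
    rw [range_none]
    ext w
    constructor
    · rintro ⟨_, hw⟩; exact hw
    · rintro rfl; exact ⟨none_mem_range L _, rfl⟩
  | some b =>
  by_cases hab : a = b
  · subst hab
    exact ⟨some a, by rw [Set.inter_self], Or.inl rfl, Or.inl rfl⟩
  by_cases hpre : a.1 <+: b.1
  · -- b = a ++ x, r = some b
    obtain ⟨x, hx⟩ := hpre
    have hxne : x ≠ [] := by
      rintro rfl
      exact hab (Subtype.ext (by simpa using hx))
    have hsub := range_subset hpos hcl hxne hx
    refine ⟨some b, ?_, Or.inr ⟨some ⟨x, ?_⟩, ?_⟩, Or.inl rfl⟩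
    · exact Set.inter_eq_self_of_subset_right hsub
    · exact (hcl a.1 x (hpos _ a.2) hxne (hx ▸ b.2)).2
    · simp only [langMul]
      rw [dif_pos (hx ▸ b.2)]
      exact congrArg some (Subtype.ext hx.symm)
  by_cases hpre' : b.1 <+: a.1
  · obtain ⟨x, hx⟩ := hpre'
    have hxne : x ≠ [] := by
      rintro rfl
      exact hab (Subtype.ext (by simpa using hx)).symm
    have hsub := range_subset hpos hcl hxne hx
    refine ⟨some a, ?_, Or.inl rfl, Or.inr ⟨some ⟨x, ?_⟩, ?_⟩⟩
    · exact Set.inter_eq_self_of_subset_left hsub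
    · exact (hcl b.1 x (hpos _ b.2) hxne (hx ▸ a.2)).2
    · simp only [langMul]
      rw [dif_pos (hx ▸ a.2)]
      exact congrArg some (Subtype.ext hx.symm)
  · -- incomparable: intersection is {0}
    refine ⟨none, ?_, Or.inr ⟨none, (mul_none' L _).symm⟩,
      Or.inr ⟨none, (mul_none' L _).symm⟩⟩
    rw [range_none]
    ext w
    constructor
    · rintro ⟨h1, h2⟩
      cases w with
      | none => rfl
      | some c =>
        have p1 := prefix_of_mem_range h1
        have p2 := prefix_of_mem_range h2
        rcases List.prefix_or_prefix_of_prefix p1 p2 with h | h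
        · exact absurd h hpre
        · exact absurd h hpre'
    · rintro rfl
      exact ⟨none_mem_range L _, none_mem_range L _⟩

end ExSt
end
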